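/- Assume 2k + 1 ≤ n, e = 0, A satisfies the (2k+1)-RIP (δ_{2k+1} < 1), every column of A has unit Euclidean norm, and there exists ρ ∈ (0,1) such that 2k α_k^RIP ‖x*‖₂ / min_{i∈S*}|x*_i| ≤ ρ. Then x* satisfies the recovery condition γ_k^RIP ‖e‖₂ < min_{i∈S*}|x*_i|/(2k) − α_k^RIP ‖x*‖₂, and for every SEA trajectory with initialization X⁰ = 0 and any step size η > 0, there exists t_s ≤ (k+1)/(1−ρ) such that S* ⊆ S^{t_s} and x^{t_s} = x*. -/

import Mathlib

/-!
In the noiseless case the least-squares residual is orthogonal to the selected columns, so SEA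
never moves a selected coordinate of `X`, while an unselected coordinate `i` moves by `η x*_i` up
to an error of at most `η α ‖x*‖`: the RIP bounds the least-squares error `‖x* - x^t‖` by
`(1 + δ_{2k}/(1 - δ_k)) ‖x*‖` and the off-diagonal part of `AᵀA` by `δ_{2k+1}`. Hence a wrong
coordinate grows by at most `η α ‖x*‖` per step, while a true coordinate grows by at least
`η (|x*_i| - α ‖x*‖)` each time it is missed. Since a wrong coordinate is selected whenever a
true one is missed, at any time `t` at which `i ∈ S*` is missed it has been missed at most
`ρ t / k` times before; counting missed (index, time) pairs shows that `S* ⊆ S^t` for some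
`t ≤ k / (1 - ρ)`, and then least squares on `S^t` returns `x*`.
-/

noncomputable section
open Finset Matrix

/-- Support of a vector as a finite set of indices. -/
def spt {d : ℕ} (x : Fin d → ℝ) : Finset (Fin d) :=
  Finset.univ.filter (fun i => x i ≠ 0)

/-- Euclidean (ℓ²) norm of a vector. -/
def l2norm {d : ℕ} (v : Fin d → ℝ) : ℝ :=
  Real.sqrt (∑ i, (v i) ^ 2)

/-- Sup (ℓ∞) norm of a vector. -/
def supNorm {d : ℕ} (v : Fin d → ℝ) : ℝ :=
  ⨆ i, |v i|

/-- The `l`-th restricted isometry constant of `A`: the smallest `δ ≥ 0` such that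
`(1-δ)‖x‖₂² ≤ ‖Ax‖₂² ≤ (1+δ)‖x‖₂²` for every `x` with at most `l` nonzero entries. -/
def ripConst {m n : ℕ} (A : Matrix (Fin m) (Fin n) ℝ) (l : ℕ) : ℝ :=
  sInf {δ : ℝ | 0 ≤ δ ∧ ∀ x : Fin n → ℝ, (spt x).card ≤ l →
    (1 - δ) * ∑ i, (x i) ^ 2 ≤ ∑ j, (A.mulVec x j) ^ 2 ∧
    ∑ j, (A.mulVec x j) ^ 2 ≤ (1 + δ) * ∑ i, (x i) ^ 2}

/-- `α_k^RIP = δ_{2k+1} (1 + δ_{2k} / (1 - δ_k))`. -/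
def alphaRIP {m n : ℕ} (A : Matrix (Fin m) (Fin n) ℝ) (k : ℕ) : ℝ :=
  ripConst A (2 * k + 1) * (1 + ripConst A (2 * k) / (1 - ripConst A k))

/-- `γ_k^RIP = 1 + δ_{2k+1} √(1+δ_k) / (1 - δ_k)`. -/
def gammaRIP {m n : ℕ} (A : Matrix (Fin m) (Fin n) ℝ) (k : ℕ) : ℝ :=
  1 + ripConst A (2 * k + 1) * Real.sqrt (1 + ripConst A k) / (1 - ripConst A k)

/-- The oracle update direction `u^t` (for current support `S`):
`u_i = -η x*_i` for `i ∈ S* \ S` and `u_i = 0` otherwise. -/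
def oracleUpd {n : ℕ} (xstar : Fin n → ℝ) (η : ℝ) (S : Finset (Fin n)) : Fin n → ℝ :=
  fun i => if xstar i ≠ 0 ∧ i ∉ S then -η * xstar i else 0

/-- The gradient noise `b = u - η Aᵀ(A x - y)`. -/
def gradNoise {m n : ℕ} (A : Matrix (Fin m) (Fin n) ℝ) (y : Fin m → ℝ)
    (xstar : Fin n → ℝ) (η : ℝ) (S : Finset (Fin n)) (xt : Fin n → ℝ) : Fin n → ℝ :=
  oracleUpd xstar η S - η • (Aᵀ.mulVec (A.mulVec xt - y))

/-- A SEA trajectory with step size `η` and initialization `X0`. -/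
structure SEATraj {m n : ℕ} (k : ℕ) (A : Matrix (Fin m) (Fin n) ℝ) (y : Fin m → ℝ)
    (η : ℝ) (X0 : Fin n → ℝ) where
  S : ℕ → Finset (Fin n)
  x : ℕ → Fin n → ℝ
  X : ℕ → Fin n → ℝ
  X_init : X 0 = X0
  card_S : ∀ t, (S t).card = k
  sel : ∀ t, ∀ i ∈ S t, ∀ j, j ∉ S t → |X t j| ≤ |X t i|
  x_supp : ∀ t, ∀ i, i ∉ S t → x t i = 0
  x_min : ∀ t, ∀ z : Fin n → ℝ, (∀ i, i ∉ S t → z i = 0) →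
    l2norm (A.mulVec (x t) - y) ≤ l2norm (A.mulVec z - y)
  X_upd : ∀ t, X (t + 1) = X t - η • (Aᵀ.mulVec (A.mulVec (x t) - y))

section Euclidean

variable {d : ℕ}

lemma mem_spt {x : Fin d → ℝ} {i : Fin d} : i ∈ spt x ↔ x i ≠ 0 := by
  simp [spt]

lemma spt_subset_iff {x : Fin d → ℝ} {s : Finset (Fin d)} : spt x ⊆ s ↔ ∀ i ∉ s, x i = 0 := by
  simp only [subset_iff, mem_spt]
  exact ⟨fun h i hi => by_contra fun hx => hi (h hx), fun h i hx => by_contra fun hi => hx (h i hi)⟩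

lemma dotProduct_eq_zero_of_disjoint_spt {u v : Fin d → ℝ} (h : Disjoint (spt u) (spt v)) :
    u ⬝ᵥ v = 0 := by
  refine sum_eq_zero fun i _ => by_contra fun hi => ?_
  exact disjoint_left.1 h (mem_spt.2 (left_ne_zero_of_mul hi)) (mem_spt.2 (right_ne_zero_of_mul hi))

lemma dotProduct_self_nonneg (v : Fin d → ℝ) : 0 ≤ v ⬝ᵥ v :=
  sum_nonneg fun i _ => mul_self_nonneg (v i)

lemma dotProduct_self_smul_add_smul (u v : Fin d → ℝ) (a b : ℝ) :
    (a • u + b • v) ⬝ᵥ (a • u + b • v) =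
      a ^ 2 * (u ⬝ᵥ u) + 2 * a * b * (u ⬝ᵥ v) + b ^ 2 * (v ⬝ᵥ v) := by
  simp only [add_dotProduct, dotProduct_add, smul_dotProduct, dotProduct_smul, smul_eq_mul,
    dotProduct_comm v u]
  ring

lemma sum_sq_eq_dotProduct (v : Fin d → ℝ) : ∑ i, v i ^ 2 = v ⬝ᵥ v := by
  simp [dotProduct, sq]

lemma l2norm_eq_sqrt (v : Fin d → ℝ) : l2norm v = √(v ⬝ᵥ v) := by
  rw [l2norm, sum_sq_eq_dotProduct]

lemma l2norm_nonneg (v : Fin d → ℝ) : 0 ≤ l2norm v := Real.sqrt_nonneg _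

@[simp]
lemma l2norm_zero : l2norm (0 : Fin d → ℝ) = 0 := by
  simp [l2norm]

lemma l2norm_sq (v : Fin d → ℝ) : l2norm v ^ 2 = v ⬝ᵥ v := by
  rw [l2norm_eq_sqrt, Real.sq_sqrt (dotProduct_self_nonneg v)]

lemma l2norm_le_l2norm_iff {u v : Fin d → ℝ} : l2norm u ≤ l2norm v ↔ u ⬝ᵥ u ≤ v ⬝ᵥ v := by
  rw [l2norm_eq_sqrt, l2norm_eq_sqrt, Real.sqrt_le_sqrt_iff (dotProduct_self_nonneg v)]

lemma l2norm_eq_zero {v : Fin d → ℝ} : l2norm v = 0 ↔ v = 0 := by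
  rw [l2norm_eq_sqrt, Real.sqrt_eq_zero (dotProduct_self_nonneg v), dotProduct_self_eq_zero]

lemma l2norm_eq_norm (v : Fin d → ℝ) : l2norm v = ‖WithLp.toLp 2 v‖ := by
  simp [l2norm, EuclideanSpace.norm_eq]

lemma l2norm_sub_le (u v : Fin d → ℝ) : l2norm (u - v) ≤ l2norm u + l2norm v := by
  simpa only [l2norm_eq_norm, WithLp.toLp_sub] using norm_sub_le _ _

lemma l2norm_sub_comm (u v : Fin d → ℝ) : l2norm (u - v) = l2norm (v - u) := by
  simpa only [l2norm_eq_norm, WithLp.toLp_sub] using norm_sub_rev _ _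

lemma l2norm_indicator_le (s : Set (Fin d)) (v : Fin d → ℝ) : l2norm (s.indicator v) ≤ l2norm v :=
  Real.sqrt_le_sqrt <| sum_le_sum fun i _ => by
    by_cases hi : i ∈ s <;> simp [hi, sq_nonneg]

lemma l2norm_single_one (i : Fin d) : l2norm (Pi.single i 1 : Fin d → ℝ) = 1 := by
  simp [l2norm_eq_sqrt]

end Euclidean

def ripBounds {m n : ℕ} (A : Matrix (Fin m) (Fin n) ℝ) (l : ℕ) : Set ℝ :=
  {δ : ℝ | 0 ≤ δ ∧ ∀ x : Fin n → ℝ, (spt x).card ≤ l →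
    (1 - δ) * ∑ i, (x i) ^ 2 ≤ ∑ j, (A.mulVec x j) ^ 2 ∧
    ∑ j, (A.mulVec x j) ^ 2 ≤ (1 + δ) * ∑ i, (x i) ^ 2}

section RestrictedIsometry

variable {m n l : ℕ} (A : Matrix (Fin m) (Fin n) ℝ)

lemma ripConst_eq_sInf (l : ℕ) : ripConst A l = sInf (ripBounds A l) := rfl

lemma isClosed_ripBounds (l : ℕ) : IsClosed (ripBounds A l) := by
  have : ripBounds A l = Set.Ici 0 ∩ ⋂ x : Fin n → ℝ, ⋂ (_ : #(spt x) ≤ l),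
      {δ | (1 - δ) * ∑ i, (x i) ^ 2 ≤ ∑ j, (A.mulVec x j) ^ 2} ∩
      {δ | ∑ j, (A.mulVec x j) ^ 2 ≤ (1 + δ) * ∑ i, (x i) ^ 2} := by
    ext δ
    simp [ripBounds]
  rw [this]
  exact isClosed_Ici.inter <| isClosed_iInter fun x => isClosed_iInter fun _ =>
    (isClosed_le (by fun_prop) continuous_const).inter (isClosed_le continuous_const (by fun_prop))

lemma frobenius_add_one_mem_ripBounds (l : ℕ) :
    ∑ j, ∑ i, A j i ^ 2 + 1 ∈ ripBounds A l := by
  have hF : 0 ≤ ∑ j, ∑ i, A j i ^ 2 := by positivity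
  refine ⟨by positivity, fun x _ => ?_⟩
  have hx : 0 ≤ ∑ i, x i ^ 2 := by positivity
  have hAx : 0 ≤ ∑ j, (A *ᵥ x) j ^ 2 := by positivity
  refine ⟨by nlinarith, ?_⟩
  calc ∑ j, (A *ᵥ x) j ^ 2 ≤ ∑ j, (∑ i, A j i ^ 2) * ∑ i, x i ^ 2 :=
        sum_le_sum fun j _ => sum_mul_sq_le_sq_mul_sq univ (A j) x
    _ = (∑ j, ∑ i, A j i ^ 2) * ∑ i, x i ^ 2 := by rw [sum_mul]
    _ ≤ (1 + (∑ j, ∑ i, A j i ^ 2 + 1)) * ∑ i, x i ^ 2 := by nlinarith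

lemma ripConst_mem_ripBounds (l : ℕ) : ripConst A l ∈ ripBounds A l :=
  ripConst_eq_sInf A l ▸ (isClosed_ripBounds A l).csInf_mem
    ⟨_, frobenius_add_one_mem_ripBounds A l⟩ ⟨0, fun _ hδ => hδ.1⟩

lemma ripConst_nonneg (l : ℕ) : 0 ≤ ripConst A l := (ripConst_mem_ripBounds A l).1

lemma ripConst_mono : Monotone (ripConst A) := fun l l' h => by
  rw [ripConst_eq_sInf, ripConst_eq_sInf]
  exact csInf_le_csInf ⟨0, fun _ hδ => hδ.1⟩ ⟨_, frobenius_add_one_mem_ripBounds A l'⟩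
    fun _ hδ => ⟨hδ.1, fun x hx => hδ.2 x (hx.trans h)⟩

variable {A}

lemma one_sub_ripConst_mul_le {x : Fin n → ℝ} (hx : #(spt x) ≤ l) :
    (1 - ripConst A l) * (x ⬝ᵥ x) ≤ A *ᵥ x ⬝ᵥ A *ᵥ x := by
  simpa only [sum_sq_eq_dotProduct] using ((ripConst_mem_ripBounds A l).2 x hx).1

lemma le_one_add_ripConst_mul {x : Fin n → ℝ} (hx : #(spt x) ≤ l) :
    A *ᵥ x ⬝ᵥ A *ᵥ x ≤ (1 + ripConst A l) * (x ⬝ᵥ x) := by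
  simpa only [sum_sq_eq_dotProduct] using ((ripConst_mem_ripBounds A l).2 x hx).2

lemma eq_zero_of_mulVec_eq_zero_of_ripConst_lt_one (hδ : ripConst A l < 1) {x : Fin n → ℝ}
    (hx : #(spt x) ≤ l) (hAx : A *ᵥ x = 0) : x = 0 := by
  have h := one_sub_ripConst_mul_le (A := A) hx
  rw [hAx, dotProduct_zero] at h
  exact dotProduct_self_eq_zero.1 <| le_antisymm
    (nonpos_of_mul_nonpos_right h (by linarith)) (dotProduct_self_nonneg x)

/-- Polarization: `4 ⟪A u, A v⟫ = ‖A(a u + b v)‖² - ‖A(a u - b v)‖²` with `a = ‖v‖`, `b = ‖u‖`,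
and both vectors `a u ± b v` have squared norm `2 a² b²` by disjointness. -/
lemma abs_dotProduct_mulVec_le {u v : Fin n → ℝ} (hdisj : Disjoint (spt u) (spt v))
    (hcard : #(spt u) + #(spt v) ≤ l) :
    |A *ᵥ u ⬝ᵥ A *ᵥ v| ≤ ripConst A l * l2norm u * l2norm v := by
  rcases (l2norm_nonneg u).eq_or_lt with hu | hu
  · simp [l2norm_eq_zero.1 hu.symm]
  rcases (l2norm_nonneg v).eq_or_lt with hv | hv
  · simp [l2norm_eq_zero.1 hv.symm]
  set a := l2norm v
  set b := l2norm u
  have hspt : ∀ s : ℝ, #(spt (a • u + s • v)) ≤ l := fun s => by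
    refine (card_le_card fun i hi => ?_).trans ((card_union_le _ _).trans hcard)
    rw [mem_union, mem_spt, mem_spt]
    by_contra! h
    exact mem_spt.1 hi (by simp [h.1, h.2])
  have hnorm : ∀ s : ℝ, (a • u + s • v) ⬝ᵥ (a • u + s • v) = a ^ 2 * b ^ 2 + s ^ 2 * a ^ 2 := by
    intro s
    rw [dotProduct_self_smul_add_smul, dotProduct_eq_zero_of_disjoint_spt hdisj, ← l2norm_sq u,
      ← l2norm_sq v]
    ring
  have hexp : ∀ s : ℝ, A *ᵥ (a • u + s • v) ⬝ᵥ A *ᵥ (a • u + s • v) =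
      a ^ 2 * (A *ᵥ u ⬝ᵥ A *ᵥ u) + 2 * a * s * (A *ᵥ u ⬝ᵥ A *ᵥ v) +
        s ^ 2 * (A *ᵥ v ⬝ᵥ A *ᵥ v) := fun s => by
    rw [mulVec_add, mulVec_smul, mulVec_smul, dotProduct_self_smul_add_smul]
  have hp₁ := one_sub_ripConst_mul_le (A := A) (hspt b)
  have hp₂ := le_one_add_ripConst_mul (A := A) (hspt b)
  have hq₁ := one_sub_ripConst_mul_le (A := A) (hspt (-b))
  have hq₂ := le_one_add_ripConst_mul (A := A) (hspt (-b))
  rw [hnorm, hexp] at hp₁ hp₂ hq₁ hq₂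
  have hab : 0 < a * b := mul_pos hv hu
  rw [abs_le]
  constructor <;> nlinarith

lemma alphaRIP_nonneg {k : ℕ} (hδ : ripConst A k < 1) : 0 ≤ alphaRIP A k := by
  have := ripConst_nonneg A (2 * k)
  have : 0 < 1 - ripConst A k := by linarith
  exact mul_nonneg (ripConst_nonneg A _) (by positivity)

lemma transpose_mulVec_apply (w : Fin m → ℝ) (i : Fin n) :
    (Aᵀ *ᵥ w) i = A *ᵥ Pi.single i 1 ⬝ᵥ w := by
  rw [mulVec_single_one, mulVec_transpose]
  simp [vecMul, dotProduct, mul_comm]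

lemma abs_transpose_mulVec_mulVec_apply_sub_le {i : Fin n} (hcol : ∑ j, A j i ^ 2 = 1)
    {g : Fin n → ℝ} (hg : #(spt g) ≤ l) :
    |(Aᵀ *ᵥ (A *ᵥ g)) i - g i| ≤ ripConst A (l + 1) * l2norm g := by
  set e : Fin n → ℝ := Pi.single i 1
  set g' := (({i}ᶜ : Set (Fin n))).indicator g
  have hsplit : g = g i • e + g' := by
    ext j
    by_cases hj : j = i
    · subst hj; simp [e, g']
    · simp [e, g', hj]
  have hee : A *ᵥ e ⬝ᵥ A *ᵥ e = 1 := by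
    rw [mulVec_single_one, ← hcol]
    simp [dotProduct, sq]
  have he : spt e = {i} := by
    ext j
    by_cases hj : j = i <;> simp [mem_spt, e, hj]
  have hg' : spt g' ⊆ (spt g).erase i := fun j hj => by
    rw [mem_spt] at hj
    have hji : j ≠ i := fun h => hj (by simp [g', h])
    rw [mem_erase, mem_spt]
    exact ⟨hji, by simpa [g', hji] using hj⟩
  have hcross := abs_dotProduct_mulVec_le (A := A) (u := e) (v := g') (l := l + 1)
    (by rw [he]; exact disjoint_singleton_left.2 fun h => by simpa using hg' h)
    (by rw [he, card_singleton]; have := card_le_card hg'; grind [card_erase_le])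
  rw [transpose_mulVec_apply, hsplit, mulVec_add, mulVec_smul, dotProduct_add, dotProduct_smul,
    hee, ← hsplit]
  calc |g i • (1 : ℝ) + A *ᵥ e ⬝ᵥ A *ᵥ g' - g i| = |A *ᵥ e ⬝ᵥ A *ᵥ g'| := by
        rw [smul_eq_mul, mul_one, add_sub_cancel_left]
    _ ≤ ripConst A (l + 1) * l2norm g' := by rwa [l2norm_single_one, mul_one] at hcross
    _ ≤ ripConst A (l + 1) * l2norm g :=
        mul_le_mul_of_nonneg_left (l2norm_indicator_le _ g) (ripConst_nonneg A _)

end RestrictedIsometry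

def IsLeastSquaresOn {m n : ℕ} (A : Matrix (Fin m) (Fin n) ℝ) (y : Fin m → ℝ)
    (S : Finset (Fin n)) (x : Fin n → ℝ) : Prop :=
  (∀ i ∉ S, x i = 0) ∧
    ∀ z : Fin n → ℝ, (∀ i ∉ S, z i = 0) → l2norm (A *ᵥ x - y) ≤ l2norm (A *ᵥ z - y)

namespace IsLeastSquaresOn

variable {m n k : ℕ} {A : Matrix (Fin m) (Fin n) ℝ} {y : Fin m → ℝ} {S : Finset (Fin n)}
  {x xstar : Fin n → ℝ}

/-- Normal equations: `ε ↦ ‖r + ε A eᵢ‖² - ‖r‖²` is a nonnegative quadratic without constant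
term, so its linear coefficient `2 ⟪r, A eᵢ⟫` vanishes. -/
lemma transpose_mulVec_residual_apply_eq_zero (h : IsLeastSquaresOn A y S x) {i : Fin n}
    (hi : i ∈ S) : (Aᵀ *ᵥ (A *ᵥ x - y)) i = 0 := by
  set r := A *ᵥ x - y
  set e : Fin n → ℝ := Pi.single i 1
  set c := A *ᵥ e
  have hquad : ∀ ε : ℝ, 0 ≤ (c ⬝ᵥ c) * (ε * ε) + (2 * (r ⬝ᵥ c)) * ε + 0 := fun ε => by
    have hz : ∀ j ∉ S, (x + ε • e) j = 0 := fun j hj => by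
      simp [e, h.1 j hj, show j ≠ i from fun h => hj (h ▸ hi)]
    have hmin := l2norm_le_l2norm_iff.1 (h.2 _ hz)
    have hr : A *ᵥ (x + ε • e) - y = (1 : ℝ) • r + ε • c := by
      rw [one_smul, mulVec_add, mulVec_smul, add_sub_right_comm]
    rw [hr, dotProduct_self_smul_add_smul] at hmin
    nlinarith
  have hdisc := discrim_le_zero hquad
  rw [discrim] at hdisc
  have hrc : r ⬝ᵥ c = 0 := by nlinarith [sq_nonneg (r ⬝ᵥ c)]
  rw [transpose_mulVec_apply, dotProduct_comm, hrc]

lemma mulVec_dotProduct_residual_eq_zero (h : IsLeastSquaresOn A y S x) {z : Fin n → ℝ}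
    (hz : ∀ i ∉ S, z i = 0) : A *ᵥ z ⬝ᵥ (A *ᵥ x - y) = 0 := by
  rw [dotProduct_comm, dotProduct_mulVec, ← mulVec_transpose]
  refine sum_eq_zero fun i _ => ?_
  by_cases hi : i ∈ S
  · simp [h.transpose_mulVec_residual_apply_eq_zero hi]
  · simp [hz i hi]

lemma eq_of_spt_subset (h : IsLeastSquaresOn A y S x) (hy : y = A *ᵥ xstar)
    (hsub : spt xstar ⊆ S) (hδ : ripConst A #S < 1) : x = xstar := by
  have hxstar := spt_subset_iff.1 hsub
  have hres : A *ᵥ (x - xstar) = 0 := by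
    have := h.2 xstar hxstar
    rwa [hy, sub_self, l2norm_zero, (l2norm_nonneg _).ge_iff_eq', l2norm_eq_zero,
      ← mulVec_sub] at this
  refine sub_eq_zero.1 (eq_zero_of_mulVec_eq_zero_of_ripConst_lt_one hδ (card_le_card ?_) hres)
  exact spt_subset_iff.2 fun i hi => by simp [h.1 i hi, hxstar i hi]

/-- Split `x - x* = w - v` with `w` supported on `S` and `v = x*` off `S`. The normal equations
give `‖A w‖² = ⟪A w, A v⟫`, and the RIP bounds the two sides by `(1 - δ_k) ‖w‖²` and
`δ_{2k} ‖w‖ ‖v‖`. -/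
lemma l2norm_sub_le_mul (h : IsLeastSquaresOn A y S x) (hy : y = A *ᵥ xstar) (hS : #S ≤ k)
    (hxstar : #(spt xstar) ≤ k) (hδ : ripConst A k < 1) :
    l2norm (xstar - x) ≤ (1 + ripConst A (2 * k) / (1 - ripConst A k)) * l2norm xstar := by
  set v := ((S : Set (Fin n))ᶜ).indicator xstar
  set w := x - (S : Set (Fin n)).indicator xstar
  have hw : spt w ⊆ S := spt_subset_iff.2 fun i hi => by simp [w, h.1 i hi, hi]
  have hv : spt v ⊆ spt xstar := spt_subset_iff.2 fun i hi => by
    simp [v, not_not.1 (mem_spt.not.1 hi)]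
  have hdisj : Disjoint (spt w) (spt v) := disjoint_left.2 fun i hiw hiv =>
    mem_spt.1 hiv (by simp [v, hw hiw])
  have hxv : x - xstar = w - v := by
    ext i
    by_cases hi : i ∈ S <;> simp [v, w, hi]
  have horth := h.mulVec_dotProduct_residual_eq_zero (spt_subset_iff.1 hw)
  rw [hy, ← mulVec_sub, hxv, mulVec_sub A w v, dotProduct_sub, sub_eq_zero] at horth
  have hlow := one_sub_ripConst_mul_le (A := A) ((card_le_card hw).trans hS)
  have hcross := abs_dotProduct_mulVec_le (A := A) hdisj
    (by have := card_le_card hv; have := card_le_card hw; omega : #(spt w) + #(spt v) ≤ 2 * k)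
  have hwv : (1 - ripConst A k) * l2norm w ≤ ripConst A (2 * k) * l2norm v := by
    rw [← l2norm_sq, horth] at hlow
    rcases (l2norm_nonneg w).eq_or_lt with hw0 | hw0
    · rw [← hw0, mul_zero]
      exact mul_nonneg (ripConst_nonneg A _) (l2norm_nonneg v)
    · nlinarith [le_abs_self (A *ᵥ w ⬝ᵥ A *ᵥ v)]
  have hvx : l2norm v ≤ l2norm xstar := l2norm_indicator_le _ xstar
  have h1δ : 0 < 1 - ripConst A k := by linarith
  have hw' : l2norm w ≤ ripConst A (2 * k) / (1 - ripConst A k) * l2norm v := by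
    rw [div_mul_eq_mul_div, le_div_iff₀ h1δ]
    linarith
  have hc : 0 ≤ ripConst A (2 * k) / (1 - ripConst A k) := by
    have := ripConst_nonneg A (2 * k)
    positivity
  calc l2norm (xstar - x) ≤ l2norm v + l2norm w := by
        rw [l2norm_sub_comm, hxv, l2norm_sub_comm]
        exact l2norm_sub_le v w
    _ ≤ (1 + ripConst A (2 * k) / (1 - ripConst A k)) * l2norm v := by linarith
    _ ≤ (1 + ripConst A (2 * k) / (1 - ripConst A k)) * l2norm xstar := by gcongr

lemma abs_transpose_mulVec_residual_apply_add_le (h : IsLeastSquaresOn A y S x)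
    (hy : y = A *ᵥ xstar) (hcols : ∀ j : Fin n, ∑ i, (A i j) ^ 2 = 1) (hS : #S = k)
    (hxstar : #(spt xstar) ≤ k) (hδ : ripConst A k < 1) {i : Fin n} (hi : i ∉ S) :
    |(Aᵀ *ᵥ (A *ᵥ x - y)) i + xstar i| ≤ alphaRIP A k * l2norm xstar := by
  have hspt : #(spt (x - xstar)) ≤ 2 * k := by
    refine (card_le_card (spt_subset_iff.2 fun j hj => ?_)).trans
      ((card_union_le S (spt xstar)).trans (by omega))
    rw [mem_union, not_or, mem_spt, not_not] at hj
    simp [h.1 j hj.1, hj.2]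
  have hcoord := abs_transpose_mulVec_mulVec_apply_sub_le (hcols i) hspt
  rw [mulVec_sub, ← hy, Pi.sub_apply, h.1 i hi, zero_sub, sub_neg_eq_add, l2norm_sub_comm]
    at hcoord
  calc _ ≤ ripConst A (2 * k + 1) * l2norm (xstar - x) := hcoord
    _ ≤ alphaRIP A k * l2norm xstar := by
        rw [alphaRIP, mul_assoc]
        exact mul_le_mul_of_nonneg_left (h.l2norm_sub_le_mul hy hS.le hxstar hδ)
          (ripConst_nonneg A _)

end IsLeastSquaresOn

lemma abs_sub_count_mul_le {p : ℕ → Prop} [DecidablePred p] {a : ℕ → ℝ} {c b : ℝ}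
    (h0 : a 0 = 0) (hstay : ∀ t, ¬p t → a (t + 1) = a t)
    (hmove : ∀ t, p t → |a (t + 1) - a t - c| ≤ b) (t : ℕ) :
    |a t - Nat.count p t * c| ≤ Nat.count p t * b := by
  induction t with
  | zero => simp [h0]
  | succ t ih =>
    by_cases ht : p t
    · rw [Nat.count_succ, if_pos ht, Nat.cast_succ]
      calc |a (t + 1) - (Nat.count p t + 1) * c|
          = |(a t - Nat.count p t * c) + (a (t + 1) - a t - c)| := by ring_nf
        _ ≤ Nat.count p t * b + b := (abs_add_le _ _).trans (add_le_add ih (hmove t ht))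
        _ = (Nat.count p t + 1) * b := by ring
    · rwa [Nat.count_succ, if_neg ht, add_zero, hstay t ht]

/-- Otherwise, with `T = ⌊k / (1 - ρ)⌋`, the at least `T + 1` bad (index, time) pairs before
`T + 1` would outnumber the at most `ρ (T + 1) + k` that the hypothesis allows. -/
lemma exists_le_forall_not_of_mul_count_le {ι : Type*} {s : Finset ι} {k : ℕ} (hk : 0 < k)
    (hs : #s ≤ k) {ρ : ℝ} (hρ0 : 0 ≤ ρ) (hρ1 : ρ < 1) (p : ι → ℕ → Prop)
    [∀ i, DecidablePred (p i)] (h : ∀ i ∈ s, ∀ t, p i t → k * Nat.count (p i) t ≤ ρ * t) :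
    ∃ t : ℕ, (t : ℝ) ≤ k / (1 - ρ) ∧ ∀ i ∈ s, ¬p i t := by
  have hbound : ∀ i ∈ s, ∀ t, (k : ℝ) * Nat.count (p i) t ≤ ρ * t + k := fun i hi t => by
    induction t with
    | zero => simp
    | succ t ih =>
      rw [Nat.count_succ]
      by_cases ht : p i t
      · rw [if_pos ht]
        push_cast
        nlinarith [h i hi t ht]
      · rw [if_neg ht]
        push_cast
        nlinarith
  by_contra! hbad
  have h1ρ : 0 < 1 - ρ := by linarith
  set T := ⌊(k : ℝ) / (1 - ρ)⌋₊
  have hcount : T + 1 ≤ ∑ i ∈ s, Nat.count (p i) (T + 1) := calc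
    T + 1 = ∑ _t ∈ range (T + 1), 1 := by simp
    _ ≤ ∑ t ∈ range (T + 1), #{i ∈ s | p i t} := sum_le_sum fun t ht => by
        have htT : (t : ℝ) ≤ T := by exact_mod_cast Nat.lt_succ_iff.1 (mem_range.1 ht)
        obtain ⟨i, hi, hit⟩ := hbad t (htT.trans (Nat.floor_le (by positivity)))
        exact card_pos.2 ⟨i, mem_filter.2 ⟨hi, hit⟩⟩
    _ = ∑ i ∈ s, Nat.count (p i) (T + 1) := by
        simp only [Nat.count_eq_card_filter_range, card_filter]
        exact sum_comm
  have hk' : (0 : ℝ) < k := by exact_mod_cast hk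
  have hmul : (k : ℝ) * (T + 1) ≤ k * (ρ * (T + 1) + k) := calc
    (k : ℝ) * (T + 1) ≤ ∑ i ∈ s, (k : ℝ) * Nat.count (p i) (T + 1) := by
        rw [← mul_sum]
        exact mul_le_mul_of_nonneg_left (by exact_mod_cast hcount) hk'.le
    _ ≤ ∑ _i ∈ s, (ρ * (T + 1) + k) := sum_le_sum fun i hi => by
        exact_mod_cast hbound i hi (T + 1)
    _ ≤ k * (ρ * (T + 1) + k) := by
        rw [sum_const, nsmul_eq_mul]
        exact mul_le_mul_of_nonneg_right (by exact_mod_cast hs) (by positivity)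
  have hT : (k : ℝ) < (T + 1) * (1 - ρ) := (div_lt_iff₀ h1ρ).1 (Nat.lt_floor_add_one _)
  nlinarith

namespace SEATraj

variable {m n k : ℕ} {A : Matrix (Fin m) (Fin n) ℝ} {y : Fin m → ℝ} {η : ℝ}
  {X0 xstar : Fin n → ℝ} {i : Fin n} {t : ℕ}

lemma isLeastSquaresOn (traj : SEATraj k A y η X0) (t : ℕ) :
    IsLeastSquaresOn A y (traj.S t) (traj.x t) :=
  ⟨traj.x_supp t, traj.x_min t⟩

lemma X_succ_apply (traj : SEATraj k A y η X0) (t : ℕ) (i : Fin n) :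
    traj.X (t + 1) i = traj.X t i - η * (Aᵀ *ᵥ (A *ᵥ traj.x t - y)) i := by
  rw [traj.X_upd]
  rfl

lemma X_succ_apply_of_mem (traj : SEATraj k A y η X0) (hi : i ∈ traj.S t) :
    traj.X (t + 1) i = traj.X t i := by
  rw [X_succ_apply, (traj.isLeastSquaresOn t).transpose_mulVec_residual_apply_eq_zero hi,
    mul_zero, sub_zero]

section Noiseless

variable (hy : y = A *ᵥ xstar) (hcols : ∀ j : Fin n, ∑ i, (A i j) ^ 2 = 1)
  (hxstar : #(spt xstar) ≤ k) (hδ : ripConst A k < 1)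
include hy hcols hxstar hδ

lemma abs_X_succ_apply_sub_le (traj : SEATraj k A y η X0) (hη : 0 ≤ η) (hi : i ∉ traj.S t) :
    |traj.X (t + 1) i - traj.X t i - η * xstar i| ≤ η * (alphaRIP A k * l2norm xstar) := by
  have h := (traj.isLeastSquaresOn t).abs_transpose_mulVec_residual_apply_add_le hy hcols
    (traj.card_S t) hxstar hδ hi
  calc |traj.X (t + 1) i - traj.X t i - η * xstar i|
      = |η| * |(Aᵀ *ᵥ (A *ᵥ traj.x t - y)) i + xstar i| := by
        rw [X_succ_apply, ← abs_mul, ← abs_neg]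
        ring_nf
    _ ≤ η * (alphaRIP A k * l2norm xstar) := by
        rw [abs_of_nonneg hη]
        exact mul_le_mul_of_nonneg_left h hη

lemma abs_X_apply_sub_count_mul_le (traj : SEATraj k A y η 0) (hη : 0 ≤ η) (t : ℕ) (i : Fin n) :
    |traj.X t i - Nat.count (fun s => i ∉ traj.S s) t * (η * xstar i)| ≤
      Nat.count (fun s => i ∉ traj.S s) t * (η * (alphaRIP A k * l2norm xstar)) :=
  abs_sub_count_mul_le (a := fun s => traj.X s i) (by simp [traj.X_init])
    (fun _ hs => traj.X_succ_apply_of_mem (not_not.1 hs))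
    (fun _ hs => traj.abs_X_succ_apply_sub_le hy hcols hxstar hδ hη hs) t

/-- At a time when `i ∈ S*` is missed, some `j ∉ S*` is selected instead; `|X_j|` has grown by at
most `η α ‖x*‖` per step, while `|X_i|` has grown by at least `η (|x*_i| - α ‖x*‖)` at each
earlier time `i` was missed. -/
lemma count_mul_sub_le (traj : SEATraj k A y η 0) (hη : 0 < η) (hi : i ∈ spt xstar)
    (hit : i ∉ traj.S t) :
    Nat.count (fun s => i ∉ traj.S s) t * (|xstar i| - alphaRIP A k * l2norm xstar) ≤
      t * (alphaRIP A k * l2norm xstar) := by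
  obtain ⟨j, hj, hjx⟩ : ∃ j ∈ traj.S t, j ∉ spt xstar := not_subset.1 fun hsub =>
    hit (eq_of_subset_of_card_le hsub (by rw [traj.card_S]; exact hxstar) ▸ hi)
  set β := alphaRIP A k * l2norm xstar
  have hβ : 0 ≤ β := mul_nonneg (alphaRIP_nonneg hδ) (l2norm_nonneg _)
  set Q := (Nat.count (fun s => i ∉ traj.S s) t : ℝ)
  have hXi := traj.abs_X_apply_sub_count_mul_le hy hcols hxstar hδ hη.le t i
  have hXj := traj.abs_X_apply_sub_count_mul_le hy hcols hxstar hδ hη.le t j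
  rw [not_not.1 (mem_spt.not.1 hjx), mul_zero, mul_zero, sub_zero] at hXj
  have hcj : (Nat.count (fun s => j ∉ traj.S s) t : ℝ) ≤ t := by exact_mod_cast Nat.count_le _
  have hgrow : Q * (η * |xstar i|) - Q * (η * β) ≤ |traj.X t i| := by
    have := abs_sub_abs_le_abs_sub (Q * (η * xstar i)) (traj.X t i)
    rw [abs_sub_comm, abs_mul, abs_mul, abs_of_nonneg hη.le, Nat.abs_cast] at this
    linarith
  have hXj' : |traj.X t j| ≤ t * (η * β) :=
    hXj.trans (mul_le_mul_of_nonneg_right hcj (by positivity))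
  have hsel := traj.sel t j hj i hit
  have : η * (Q * (|xstar i| - β)) ≤ η * (t * β) := by linarith
  exact le_of_mul_le_mul_left this hη

lemma exists_spt_subset (traj : SEATraj k A y η 0) (hη : 0 < η) (hk : 0 < k) {ρ : ℝ}
    (hρ0 : 0 ≤ ρ) (hρ1 : ρ < 1)
    (hsrc : ∀ i ∈ spt xstar, 2 * k * (alphaRIP A k * l2norm xstar) ≤ ρ * |xstar i|) :
    ∃ t : ℕ, (t : ℝ) ≤ k / (1 - ρ) ∧ spt xstar ⊆ traj.S t := by
  have hmissed : ∀ i ∈ spt xstar, ∀ t, i ∉ traj.S t →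
      k * Nat.count (fun s => i ∉ traj.S s) t ≤ ρ * t := by
    intro i hi t hit
    have hcount := traj.count_mul_sub_le hy hcols hxstar hδ hη hi hit
    set β := alphaRIP A k * l2norm xstar
    set Q := (Nat.count (fun s => i ∉ traj.S s) t : ℝ)
    have hβ : 0 ≤ β := mul_nonneg (alphaRIP_nonneg hδ) (l2norm_nonneg _)
    have hxi : 0 < |xstar i| := abs_pos.2 (mem_spt.1 hi)
    have hk1 : (1 : ℝ) ≤ k := by exact_mod_cast hk
    have hQ : 0 ≤ Q := Nat.cast_nonneg _
    have ht0 : (0 : ℝ) ≤ t := Nat.cast_nonneg _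
    have hsrci := hsrc i hi
    -- `2 β ≤ 2 k β ≤ ρ |x*_i| < |x*_i|`
    have hhalf : |xstar i| / 2 ≤ |xstar i| - β := by nlinarith
    have : k * Q * (|xstar i| / 2) ≤ ρ * t * (|xstar i| / 2) := by
      nlinarith [mul_le_mul_of_nonneg_left hhalf (by positivity : (0 : ℝ) ≤ k * Q),
        mul_le_mul_of_nonneg_left hcount (by positivity : (0 : ℝ) ≤ k),
        mul_le_mul_of_nonneg_left hsrci ht0]
    exact le_of_mul_le_mul_right this (by positivity)
  obtain ⟨t, ht, hgood⟩ := exists_le_forall_not_of_mul_count_le hk hxstar hρ0 hρ1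
    (fun i s => i ∉ traj.S s) hmissed
  exact ⟨t, ht, fun i hi => not_not.1 (hgood i hi)⟩

end Noiseless

end SEATraj

theorem sea_noiseless_recovery_simplified_RIP_general {m n k : ℕ} (hk : 0 < k)
    (A : Matrix (Fin m) (Fin n) ℝ) (hRIP : ripConst A (2 * k + 1) < 1)
    (hcols : ∀ j : Fin n, ∑ i, (A i j) ^ 2 = 1)
    (xstar : Fin n → ℝ) (hspars : (spt xstar).card ≤ k) (hne : (spt xstar).Nonempty)
    (e : Fin m → ℝ) (he : e = 0) (y : Fin m → ℝ) (hy : y = A.mulVec xstar + e)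
    (ρ : ℝ) (hρ0 : 0 < ρ) (hρ1 : ρ < 1)
    (hSRC : 2 * k * alphaRIP A k * l2norm xstar /
      ((spt xstar).inf' hne (fun i => |xstar i|)) ≤ ρ) :
    (gammaRIP A k * l2norm e <
      ((spt xstar).inf' hne (fun i => |xstar i|)) / (2 * k) -
        alphaRIP A k * l2norm xstar) ∧
    ∀ (η : ℝ), 0 < η → ∀ (traj : SEATraj k A y η (0 : Fin n → ℝ)),
      ∃ ts : ℕ, (ts : ℝ) ≤ (k + 1) / (1 - ρ) ∧
        spt xstar ⊆ traj.S ts ∧ traj.x ts = xstar := by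
  have hy' : y = A *ᵥ xstar := by rw [hy, he, add_zero]
  have hδ : ripConst A k < 1 := (ripConst_mono A (by omega : k ≤ 2 * k + 1)).trans_lt hRIP
  have hμ : 0 < (spt xstar).inf' hne (fun i => |xstar i|) :=
    (lt_inf'_iff hne).2 fun i hi => abs_pos.2 (mem_spt.1 hi)
  have hsrc := (div_le_iff₀ hμ).1 hSRC
  refine ⟨?_, fun η hη traj => ?_⟩
  · rw [he, l2norm_zero, mul_zero, sub_pos, lt_div_iff₀ (by positivity)]
    nlinarith
  obtain ⟨ts, hts, hsub⟩ := traj.exists_spt_subset hy' hcols hspars hδ hη hk hρ0.le hρ1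
    fun i hi => by
      rw [← mul_assoc]
      exact hsrc.trans (mul_le_mul_of_nonneg_left (inf'_le _ hi) hρ0.le)
  refine ⟨ts, hts.trans (by gcongr; linarith), hsub,
    (traj.isLeastSquaresOn ts).eq_of_spt_subset hy' hsub ?_⟩
  rwa [traj.card_S]

/-- Noiseless recovery, simplified RIP case: if `2k α_k^RIP ‖x*‖₂ / min_{i∈S*}|x*_i| ≤ ρ`
for some `ρ ∈ (0,1)`, then the recovery condition (RC_RIP) holds and SEA initialized
at `0` visits the true support exactly within `(k+1)/(1−ρ)` iterations. -/
theorem sea_noiseless_recovery_simplified_RIP {m n k : ℕ} (hm : 0 < m) (hk : 0 < k)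
    (hkn : 2 * k + 1 ≤ n)
    (A : Matrix (Fin m) (Fin n) ℝ) (hRIP : ripConst A (2 * k + 1) < 1)
    (hcols : ∀ j : Fin n, ∑ i, (A i j) ^ 2 = 1)
    (xstar : Fin n → ℝ) (hspars : (spt xstar).card ≤ k) (hne : (spt xstar).Nonempty)
    (e : Fin m → ℝ) (he : e = 0) (y : Fin m → ℝ) (hy : y = A.mulVec xstar + e)
    (ρ : ℝ) (hρ0 : 0 < ρ) (hρ1 : ρ < 1)
    (hSRC : 2 * k * alphaRIP A k * l2norm xstar /
      ((spt xstar).inf' hne (fun i => |xstar i|)) ≤ ρ) :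
    (gammaRIP A k * l2norm e <
      ((spt xstar).inf' hne (fun i => |xstar i|)) / (2 * k) -
        alphaRIP A k * l2norm xstar) ∧
    ∀ (η : ℝ), 0 < η → ∀ (traj : SEATraj k A y η (0 : Fin n → ℝ)),
      ∃ ts : ℕ, (ts : ℝ) ≤ (k + 1) / (1 - ρ) ∧
        spt xstar ⊆ traj.S ts ∧ traj.x ts = xstar :=
  sea_noiseless_recovery_simplified_RIP_general hk A hRIP hcols xstar hspars hne e he y hy ρ hρ0 hρ1
    hSRC

end
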